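/- Let f(u,v) = u³ + b u²v + c uv² + d v³ be a monic integral binary cubic form and let W_J(Z) = Z ⊕ J_R ⊕ J_R^∨ ⊕ Z. Then the set Ω_{f,I} = {w ∈ W_J(Z) : w rank one, pr_I(w) = f} equals {(1, T, T#, N_J(T)) : T ∈ J_R, (T,I#) = b, (T#,I) = c, N_J(T) = d}, and this set is finite. -/

import Mathlib

open Quaternion

/-- Hamilton's rational quaternions. -/
abbrev H : Type := ℍ[ℚ]

/-- The octonions as the Cayley–Dickson double `H ⊕ H` with `γ = -1`. -/
abbrev O : Type := H × H

/-- Octonion multiplication: `(x₁,y₁)(x₂,y₂) = (x₁x₂ - y₂* y₁, y₂x₁ + y₁x₂*)`. -/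
def omul (z w : O) : O :=
  (z.1 * w.1 - star w.2 * z.2, w.2 * z.1 + z.2 * star w.1)

/-- Octonion conjugation `(x,y)* = (x*, -y)`. -/
def ostar (z : O) : O := (star z.1, -z.2)

/-- The unit octonion. -/
def oone : O := (1, 0)

/-- The positive-definite octonion norm `n((x,y)) = n_H(x) + n_H(y)`. -/
def onorm (z : O) : ℚ := normSq z.1 + normSq z.2

/-- The octonion trace `tr((x,y)) = tr_H(x)`. -/
def otr (z : O) : ℚ := (z.1 + star z.1).re

/-- The bilinear form `(x,y) = n(x+y) - n(x) - n(y)`. -/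
def obil (x y : O) : ℚ := onorm (x + y) - onorm x - onorm y

/-- The trilinear form `(x,y,z) = tr(x(yz))`. -/
def otri (x y z : O) : ℚ := otr (omul x (omul y z))

/-- Elements of `J = H₃(O)`, written `[c₁,c₂,c₃;x₁,x₂,x₃]`. -/
abbrev Jt : Type := ℚ × ℚ × ℚ × O × O × O

def mkJ (c₁ c₂ c₃ : ℚ) (x₁ x₂ x₃ : O) : Jt := (c₁, c₂, c₃, x₁, x₂, x₃)

/-- The cubic norm on `J = H₃(O)`. -/
def NJ : Jt → ℚ
  | (c₁, c₂, c₃, x₁, x₂, x₃) =>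
    c₁ * c₂ * c₃ - c₁ * onorm x₁ - c₂ * onorm x₂ - c₃ * onorm x₃ + otri x₁ x₂ x₃

/-- The trace pairing `(X,X')_I` on `J`. -/
def pairI : Jt → Jt → ℚ
  | (c₁, c₂, c₃, x₁, x₂, x₃), (d₁, d₂, d₃, y₁, y₂, y₃) =>
    c₁ * d₁ + c₂ * d₂ + c₃ * d₃ + obil x₁ y₁ + obil x₂ y₂ + obil x₃ y₃

/-- The adjoint `ι(X^#)`. -/
def sharpJ : Jt → Jt
  | (c₁, c₂, c₃, x₁, x₂, x₃) =>
    (c₂ * c₃ - onorm x₁, c₃ * c₁ - onorm x₂, c₁ * c₂ - onorm x₃,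
      ostar (omul x₂ x₃) - c₁ • x₁, ostar (omul x₃ x₁) - c₂ • x₂,
      ostar (omul x₁ x₂) - c₃ • x₃)

/-- The element `I = [1,1,1;0,0,0]`. -/
def IJ : Jt := mkJ 1 1 1 0 0 0

/-- The octonion `β = ½(-1+i+j+k, 1+i+j+k)`. -/
def βO : O := (⟨-1/2, 1/2, 1/2, 1/2⟩, ⟨1/2, 1/2, 1/2, 1/2⟩)

/-- The element `E = [2,2,2;β,β,β]`. -/
def EJ : Jt := mkJ 2 2 2 βO βO βO

/-- The octonions `i, j, k, e = (0,1)` and `h = ½(i+j+k+e)`. -/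
def iO : O := (⟨0, 1, 0, 0⟩, 0)
def jO : O := (⟨0, 0, 1, 0⟩, 0)
def kO : O := (⟨0, 0, 0, 1⟩, 0)
def eO : O := (0, 1)
def hO : O := (⟨0, 1/2, 1/2, 1/2⟩, ⟨1/2, 0, 0, 0⟩)

/-- A `ℤ`-basis of Coxeter's order `R` of integral octonions:
`jh, e, -h, j, ih, 1, eh, ke`. -/
def coxBasis : Fin 8 → O :=
  ![omul jO hO, eO, -hO, jO, omul iO hO, oone, omul eO hO, omul kO eO]

/-- Membership in Coxeter's maximal order `R ⊆ O` of integral octonions. -/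
def inR (x : O) : Prop := ∃ a : Fin 8 → ℤ, x = ∑ i, (a i : ℚ) • coxBasis i

/-- Membership in the integral lattice `J_R ⊆ J`: diagonal entries in `ℤ`, off-diagonal
entries in Coxeter's order `R`. -/
def inJR : Jt → Prop
  | (c₁, c₂, c₃, x₁, x₂, x₃) =>
    (∃ n : ℤ, c₁ = n) ∧ (∃ n : ℤ, c₂ = n) ∧ (∃ n : ℤ, c₃ = n) ∧ inR x₁ ∧ inR x₂ ∧ inR x₃

/-- Elements of Freudenthal's space `W_J = ℚ ⊕ J ⊕ J^∨ ⊕ ℚ`, with `J^∨` identified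
with `J` via the trace pairing `(,)_I`. -/
abbrev Wt : Type := ℚ × Jt × Jt × ℚ

/-- Membership in the dual lattice `J_R^∨ = {Y : (Y,X)_I ∈ ℤ for all X ∈ J_R}`. -/
def inJRdual (Y : Jt) : Prop := ∀ X : Jt, inJR X → ∃ n : ℤ, pairI Y X = n

/-- Membership in the integral lattice `W_J(ℤ) = ℤ ⊕ J_R ⊕ J_R^∨ ⊕ ℤ`. -/
def inWZ (w : Wt) : Prop :=
  (∃ n : ℤ, w.1 = n) ∧ inJR w.2.1 ∧ inJRdual w.2.2.1 ∧ (∃ n : ℤ, w.2.2.2 = n)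

/-- `w = (a,b,c,d) ∈ W_J` has rank one: `w ≠ 0`, `b^# = ac`, `c^# = db`, and
`(b,c) = 3ad`. -/
def wRankOne (w : Wt) : Prop :=
  w ≠ 0 ∧ sharpJ w.2.1 = w.1 • w.2.2.1 ∧ sharpJ w.2.2.1 = w.2.2.2 • w.2.1 ∧
    pairI w.2.1 w.2.2.1 = 3 * w.1 * w.2.2.2

/-- `pr_I(w)` for `w = (a,b,c,d)`: the binary cubic form
`a u³ + (b,I^#) u²v + (c,I) uv² + d v³`, recorded by its coefficient vector. -/
def prI (w : Wt) : ℚ × ℚ × ℚ × ℚ :=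
  (w.1, pairI w.2.1 (sharpJ IJ), pairI w.2.2.1 IJ, w.2.2.2)

/-!
A rank-one `w = (a, B, C, d)` with `a = 1` is `(1, T, T^#, N(T))`: `B^# = aC` gives `C = T^#` and
`(T, T^#) = 3 N(T)` gives `d = N(T)`; conversely `T^## = N(T) T` makes every such `w` rank one.
Both Freudenthal identities are polynomial identities in the 27 rational coordinates of `T`.

Integrality of `T^#` and of the pairing on `J_R` comes down to Coxeter's order `R` being closed
under multiplication and conjugation, with integral norm and bilinear form. The matrix of the
basis `coxBasis` has an integral inverse, so membership in `R` is integrality of finitely many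
linear forms, and by bilinearity each closure property is a finite computation on basis vectors.

Finiteness: on `Ω_{f,I}` the positive-definite form `(T, T)_I = (T, I^#)² - 2 (T^#, I)` equals
`b² - 2c`, while `J_R` lies in the lattice of half-integral coordinates.
-/

open Submodule Set Matrix

theorem LinearMap.apply_mem_of_mem_span {R M N : Type*} [Semiring R] [AddCommMonoid M]
    [AddCommMonoid N] [Module R M] [Module R N] (f : M →ₗ[R] N) {s : Set M} {p : Submodule R N}
    (hs : ∀ m ∈ s, f m ∈ p) {x : M} (hx : x ∈ span R s) : f x ∈ p :=
  (span_le (p := p.comap f)).2 hs hx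

theorem mem_one_iff_exists_int {q : ℚ} : q ∈ (1 : Submodule ℤ ℚ) ↔ ∃ n : ℤ, q = n := by
  simp [Submodule.mem_one, eq_comm]

theorem mem_one_of_den_eq_one {q : ℚ} (h : q.den = 1) : q ∈ (1 : Submodule ℤ ℚ) :=
  mem_one_iff_exists_int.2 ⟨q.num, (Rat.coe_int_num_of_den_eq_one h).symm⟩

theorem finite_setOf_two_mul_mem_one_sq_le (M : ℚ) :
    {q : ℚ | 2 * q ∈ (1 : Submodule ℤ ℚ) ∧ q ^ 2 ≤ M}.Finite := by
  refine ((finite_Icc (-⌈4 * M⌉) ⌈4 * M⌉).image fun m : ℤ => (m : ℚ) / 2).subset ?_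
  rintro q ⟨hq, hM⟩
  obtain ⟨m, hm⟩ := mem_one_iff_exists_int.1 hq
  have hm_sq : (m : ℚ) ^ 2 ≤ ⌈4 * M⌉ := by
    rw [← hm]
    linarith [Int.le_ceil (4 * M)]
  have hm_abs : |(m : ℚ)| ≤ (m : ℚ) ^ 2 := by exact_mod_cast Int.natAbs_le_self_sq m
  refine ⟨m, abs_le.1 ?_, by simp only [← hm]; ring⟩
  exact_mod_cast hm_abs.trans hm_sq

def omulₗ : O →ₗ[ℚ] O →ₗ[ℚ] O :=
  LinearMap.mk₂ ℚ omul
    (fun x y z => by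
      simp only [omul, Prod.fst_add, Prod.snd_add, add_mul, mul_add, Prod.mk_add_mk,
        Prod.mk.injEq]
      constructor <;> abel)
    (fun q x y => by
      simp only [omul, Prod.smul_fst, Prod.smul_snd, smul_mul_assoc, mul_smul_comm, smul_sub,
        smul_add, Prod.smul_mk])
    (fun x y z => by
      simp only [omul, Prod.fst_add, Prod.snd_add, star_add, add_mul, mul_add, Prod.mk_add_mk,
        Prod.mk.injEq]
      constructor <;> abel)
    (fun q x y => by
      simp only [omul, Prod.smul_fst, Prod.smul_snd, smul_mul_assoc, mul_smul_comm,
        Quaternion.star_smul, smul_sub, smul_add, Prod.smul_mk])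

def ostarₗ : O →ₗ[ℚ] O where
  toFun := ostar
  map_add' x y := by
    simp only [ostar, Prod.fst_add, Prod.snd_add, star_add, neg_add, Prod.mk_add_mk]
  map_smul' q x := by
    simp only [ostar, Prod.smul_fst, Prod.smul_snd, Quaternion.star_smul, smul_neg, Prod.smul_mk,
      RingHom.id_apply]

def octCoords : O →ₗ[ℚ] Fin 8 → ℚ where
  toFun x := ![x.1.re, x.1.imI, x.1.imJ, x.1.imK, x.2.re, x.2.imI, x.2.imJ, x.2.imK]
  map_add' x y := by ext k; fin_cases k <;> simp
  map_smul' q x := by ext k; fin_cases k <;> simp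

theorem octCoords_injective : Function.Injective octCoords := by
  intro x y h
  have := fun k => congrFun h k
  ext
  exacts [this 0, this 1, this 2, this 3, this 4, this 5, this 6, this 7]

theorem onorm_eq_dotProduct (x : O) : onorm x = octCoords x ⬝ᵥ octCoords x := by
  simp [onorm, octCoords, dotProduct, Fin.sum_univ_eight, Quaternion.normSq_def']
  ring

theorem obil_eq_dotProduct (x y : O) : obil x y = 2 * (octCoords x ⬝ᵥ octCoords y) := by
  simp [obil, onorm, octCoords, dotProduct, Fin.sum_univ_eight, Quaternion.normSq_def']
  ring

def obilₗ : O →ₗ[ℚ] O →ₗ[ℚ] ℚ :=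
  LinearMap.mk₂ ℚ obil
    (fun x y z => by simp only [obil_eq_dotProduct, map_add, add_dotProduct, mul_add])
    (fun q x y => by simp only [obil_eq_dotProduct, map_smul, smul_dotProduct, mul_smul_comm])
    (fun x y z => by simp only [obil_eq_dotProduct, map_add, dotProduct_add, mul_add])
    (fun q x y => by simp only [obil_eq_dotProduct, map_smul, dotProduct_smul, mul_smul_comm])

theorem obil_self (x : O) : obil x x = 2 * onorm x := by
  rw [obil_eq_dotProduct, onorm_eq_dotProduct]

theorem obil_zero (x : O) : obil x 0 = 0 := by
  rw [obil_eq_dotProduct, map_zero, dotProduct_zero, mul_zero]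

theorem onorm_add (x y : O) : onorm (x + y) = onorm x + onorm y + obil x y := by
  rw [obil]
  ring

theorem onorm_zsmul (n : ℤ) (x : O) : onorm (n • x) = n ^ 2 * onorm x := by
  rw [onorm_eq_dotProduct, onorm_eq_dotProduct, ← Int.cast_smul_eq_zsmul ℚ, map_smul,
    smul_dotProduct, dotProduct_smul, smul_eq_mul, smul_eq_mul]
  ring

theorem sq_octCoords_le_onorm (x : O) (k : Fin 8) : octCoords x k ^ 2 ≤ onorm x := by
  rw [onorm_eq_dotProduct, dotProduct, sq]
  exact Finset.single_le_sum (f := fun k => octCoords x k * octCoords x k)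
    (fun k _ => mul_self_nonneg _) (Finset.mem_univ k)

theorem onorm_nonneg (x : O) : 0 ≤ onorm x :=
  (sq_nonneg _).trans (sq_octCoords_le_onorm x 0)

def coxOrder : Submodule ℤ O := span ℤ (range coxBasis)

theorem inR_iff_mem_coxOrder {x : O} : inR x ↔ x ∈ coxOrder := by
  simp only [inR, coxOrder, mem_span_range_iff_exists_fun, Int.cast_smul_eq_zsmul, eq_comm]

def coxBasisMatrix : Matrix (Fin 8) (Fin 8) ℚ := .of fun j k => octCoords (coxBasis k) j

/-- The inverse of `coxBasisMatrix`. Its entries are integers, so `x ∈ coxOrder` exactly when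
`coxCoords x` is integral. -/
def coxCoordMatrix : Matrix (Fin 8) (Fin 8) ℚ :=
  !![0, 2, 0, -2, 0, 2, -2, 0;
     0, 0, 0, -1, 1, 1, -1, 0;
     0, 0, 0, -2, 0, 2, -2, 0;
     0, 1, 1, -2, 0, 3, -3, 0;
     0, 2, 0, -2, 0, 4, -4, 0;
     1, 3, 0, -3, 0, 4, -5, 0;
     0, 2, 0, -2, 0, 2, -4, 0;
     0, 1, 0, -1, 0, 1, -2, 1]

def coxCoords (x : O) : Fin 8 → ℚ := coxCoordMatrix *ᵥ octCoords x

theorem coxBasisMatrix_mul_coxCoordMatrix : coxBasisMatrix * coxCoordMatrix = 1 := by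
  decide +kernel

theorem sum_coxCoords_smul_coxBasis (x : O) : ∑ k, coxCoords x k • coxBasis k = x := by
  apply octCoords_injective
  have h := congrArg (· *ᵥ octCoords x) coxBasisMatrix_mul_coxCoordMatrix
  simp only [← mulVec_mulVec, one_mulVec] at h
  rw [← h, map_sum]
  ext j
  simp [coxBasisMatrix, coxCoords, mulVec, dotProduct, mul_comm]

theorem mem_coxOrder_of_den_coxCoords {x : O} (h : ∀ k, (coxCoords x k).den = 1) :
    x ∈ coxOrder := by
  rw [← sum_coxCoords_smul_coxBasis x]
  refine sum_mem fun k _ => ?_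
  rw [← Rat.coe_int_num_of_den_eq_one (h k), Int.cast_smul_eq_zsmul]
  exact zsmul_mem (subset_span (mem_range_self k)) _

theorem omul_mem_coxOrder {x y : O} (hx : x ∈ coxOrder) (hy : y ∈ coxOrder) :
    omul x y ∈ coxOrder := by
  have hbasis : ∀ i j k : Fin 8, (coxCoords (omul (coxBasis i) (coxBasis j)) k).den = 1 := by
    decide +kernel
  refine LinearMap.BilinMap.apply_apply_mem_of_mem_span _ _ _ (omulₗ.restrictScalars₁₂ ℤ ℤ)
    ?_ _ _ hx hy
  rintro _ ⟨i, rfl⟩ _ ⟨j, rfl⟩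
  exact mem_coxOrder_of_den_coxCoords (hbasis i j)

theorem ostar_mem_coxOrder {x : O} (hx : x ∈ coxOrder) : ostar x ∈ coxOrder := by
  have hbasis : ∀ i k : Fin 8, (coxCoords (ostar (coxBasis i)) k).den = 1 := by
    decide +kernel
  refine (ostarₗ.restrictScalars ℤ).apply_mem_of_mem_span ?_ hx
  rintro _ ⟨i, rfl⟩
  exact mem_coxOrder_of_den_coxCoords (hbasis i)

theorem obil_mem_one {x y : O} (hx : x ∈ coxOrder) (hy : y ∈ coxOrder) :
    obil x y ∈ (1 : Submodule ℤ ℚ) := by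
  have hbasis : ∀ i j : Fin 8, (obil (coxBasis i) (coxBasis j)).den = 1 := by
    decide +kernel
  refine LinearMap.BilinMap.apply_apply_mem_of_mem_span _ _ _ (obilₗ.restrictScalars₁₂ ℤ ℤ)
    ?_ _ _ hx hy
  rintro _ ⟨i, rfl⟩ _ ⟨j, rfl⟩
  exact mem_one_of_den_eq_one (hbasis i j)

theorem onorm_mem_one {x : O} (hx : x ∈ coxOrder) : onorm x ∈ (1 : Submodule ℤ ℚ) := by
  have hbasis : ∀ i : Fin 8, (onorm (coxBasis i)).den = 1 := by decide +kernel
  induction hx using span_induction with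
  | mem _ h =>
    obtain ⟨i, rfl⟩ := h
    exact mem_one_of_den_eq_one (hbasis i)
  | zero => simp [onorm]
  | add x y hx hy ihx ihy =>
    rw [onorm_add]
    exact add_mem (add_mem ihx ihy) (obil_mem_one hx hy)
  | smul n x _ ih =>
    rw [onorm_zsmul]
    obtain ⟨m, hm⟩ := mem_one_iff_exists_int.1 ih
    exact mem_one_iff_exists_int.2 ⟨n ^ 2 * m, by rw [hm]; push_cast; ring⟩

theorem two_mul_octCoords_mem_one {x : O} (hx : x ∈ coxOrder) (k : Fin 8) :
    2 * octCoords x k ∈ (1 : Submodule ℤ ℚ) := by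
  have hbasis : ∀ i k : Fin 8, (2 * octCoords (coxBasis i) k).den = 1 := by decide +kernel
  refine (((2 : ℚ) • (LinearMap.proj k ∘ₗ octCoords)).restrictScalars ℤ).apply_mem_of_mem_span
    ?_ hx
  rintro _ ⟨i, rfl⟩
  exact mem_one_of_den_eq_one (hbasis i k)

theorem finite_setOf_mem_coxOrder_onorm_le (M : ℚ) :
    {x : O | x ∈ coxOrder ∧ onorm x ≤ M}.Finite := by
  refine ((Finite.pi' fun _ => finite_setOf_two_mul_mem_one_sq_le M).preimage
    octCoords_injective.injOn).subset ?_
  rintro x ⟨hx, hM⟩ k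
  exact ⟨two_mul_octCoords_mem_one hx k, (sq_octCoords_le_onorm x k).trans hM⟩

theorem pairI_sharpJ_self (T : Jt) : pairI T (sharpJ T) = 3 * NJ T := by
  obtain ⟨c₁, c₂, c₃, x₁, x₂, x₃⟩ := T
  simp only [pairI, sharpJ, NJ, obil, onorm, otri, otr, omul, ostar, Quaternion.normSq_def',
    Prod.fst_add, Prod.snd_add, Prod.fst_sub, Prod.snd_sub, Prod.smul_fst, Prod.smul_snd,
    Quaternion.re_add, Quaternion.imI_add, Quaternion.imJ_add, Quaternion.imK_add,
    Quaternion.re_sub, Quaternion.imI_sub, Quaternion.imJ_sub, Quaternion.imK_sub,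
    Quaternion.re_mul, Quaternion.imI_mul, Quaternion.imJ_mul, Quaternion.imK_mul,
    Quaternion.re_star, Quaternion.imI_star, Quaternion.imJ_star, Quaternion.imK_star,
    Quaternion.re_smul, Quaternion.imI_smul, Quaternion.imJ_smul, Quaternion.imK_smul,
    Quaternion.re_neg, Quaternion.imI_neg, Quaternion.imJ_neg, Quaternion.imK_neg, smul_eq_mul]
  ring

set_option maxHeartbeats 4000000 in
theorem sharpJ_sharpJ (T : Jt) : sharpJ (sharpJ T) = NJ T • T := by
  obtain ⟨c₁, c₂, c₃, x₁, x₂, x₃⟩ := T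
  simp only [sharpJ, NJ, Prod.smul_mk, Prod.mk.injEq]
  refine ⟨?_, ?_, ?_, ?_, ?_, ?_⟩ <;> try ext
  all_goals
    simp only [onorm, otri, otr, omul, ostar, Quaternion.normSq_def',
      Prod.fst_sub, Prod.snd_sub, Prod.smul_fst, Prod.smul_snd,
      Quaternion.re_add, Quaternion.imI_add, Quaternion.imJ_add, Quaternion.imK_add,
      Quaternion.re_sub, Quaternion.imI_sub, Quaternion.imJ_sub, Quaternion.imK_sub,
      Quaternion.re_mul, Quaternion.imI_mul, Quaternion.imJ_mul, Quaternion.imK_mul,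
      Quaternion.re_star, Quaternion.imI_star, Quaternion.imJ_star, Quaternion.imK_star,
      Quaternion.re_smul, Quaternion.imI_smul, Quaternion.imJ_smul, Quaternion.imK_smul,
      Quaternion.re_neg, Quaternion.imI_neg, Quaternion.imJ_neg, Quaternion.imK_neg, smul_eq_mul]
    ring

theorem sharpJ_IJ : sharpJ IJ = IJ := by
  simp [sharpJ, IJ, mkJ, onorm, omul, ostar]

theorem pairI_self (c₁ c₂ c₃ : ℚ) (x₁ x₂ x₃ : O) :
    pairI (c₁, c₂, c₃, x₁, x₂, x₃) (c₁, c₂, c₃, x₁, x₂, x₃) =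
      c₁ ^ 2 + c₂ ^ 2 + c₃ ^ 2 + 2 * (onorm x₁ + onorm x₂ + onorm x₃) := by
  simp only [pairI, obil_self]
  ring

theorem pairI_self_eq (T : Jt) :
    pairI T T = pairI T (sharpJ IJ) ^ 2 - 2 * pairI (sharpJ T) IJ := by
  obtain ⟨c₁, c₂, c₃, x₁, x₂, x₃⟩ := T
  rw [sharpJ_IJ, pairI_self]
  simp only [pairI, sharpJ, IJ, mkJ, obil_zero]
  ring

theorem inJR_sharpJ {T : Jt} (hT : inJR T) : inJR (sharpJ T) := by
  obtain ⟨c₁, c₂, c₃, x₁, x₂, x₃⟩ := T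
  obtain ⟨⟨n₁, rfl⟩, ⟨n₂, rfl⟩, ⟨n₃, rfl⟩, hx₁, hx₂, hx₃⟩ := hT
  simp only [inR_iff_mem_coxOrder] at hx₁ hx₂ hx₃
  have diag (m n : ℤ) {x : O} (hx : x ∈ coxOrder) : ∃ k : ℤ, (m : ℚ) * n - onorm x = k := by
    obtain ⟨k, hk⟩ := mem_one_iff_exists_int.1 (onorm_mem_one hx)
    exact ⟨m * n - k, by rw [hk]; push_cast; ring⟩
  have offdiag (n : ℤ) {x y z : O} (hx : x ∈ coxOrder) (hy : y ∈ coxOrder)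
      (hz : z ∈ coxOrder) : inR (ostar (omul x y) - (n : ℚ) • z) := by
    rw [inR_iff_mem_coxOrder, Int.cast_smul_eq_zsmul]
    exact sub_mem (ostar_mem_coxOrder (omul_mem_coxOrder hx hy)) (zsmul_mem hz n)
  exact ⟨diag n₂ n₃ hx₁, diag n₃ n₁ hx₂, diag n₁ n₂ hx₃, offdiag n₁ hx₂ hx₃ hx₁,
    offdiag n₂ hx₃ hx₁ hx₂, offdiag n₃ hx₁ hx₂ hx₃⟩

theorem pairI_mem_one {X Y : Jt} (hX : inJR X) (hY : inJR Y) :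
    pairI X Y ∈ (1 : Submodule ℤ ℚ) := by
  obtain ⟨c₁, c₂, c₃, x₁, x₂, x₃⟩ := X
  obtain ⟨d₁, d₂, d₃, y₁, y₂, y₃⟩ := Y
  obtain ⟨⟨m₁, rfl⟩, ⟨m₂, rfl⟩, ⟨m₃, rfl⟩, hx₁, hx₂, hx₃⟩ := hX
  obtain ⟨⟨n₁, rfl⟩, ⟨n₂, rfl⟩, ⟨n₃, rfl⟩, hy₁, hy₂, hy₃⟩ := hY
  simp only [inR_iff_mem_coxOrder] at hx₁ hx₂ hx₃ hy₁ hy₂ hy₃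
  have diag (m n : ℤ) : (m : ℚ) * n ∈ (1 : Submodule ℤ ℚ) :=
    mem_one_iff_exists_int.2 ⟨m * n, by push_cast; rfl⟩
  exact add_mem (add_mem (add_mem (add_mem (add_mem (diag m₁ n₁) (diag m₂ n₂)) (diag m₃ n₃))
    (obil_mem_one hx₁ hy₁)) (obil_mem_one hx₂ hy₂)) (obil_mem_one hx₃ hy₃)

theorem inJRdual_of_inJR {Y : Jt} (hY : inJR Y) : inJRdual Y :=
  fun _ hX => mem_one_iff_exists_int.1 (pairI_mem_one hY hX)

theorem finite_setOf_inJR_pairI_self_le (M : ℚ) :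
    {T : Jt | inJR T ∧ pairI T T ≤ M}.Finite := by
  have hF := finite_setOf_two_mul_mem_one_sq_le M
  have hG := finite_setOf_mem_coxOrder_onorm_le M
  refine (hF.prod (hF.prod (hF.prod (hG.prod (hG.prod hG))))).subset ?_
  rintro ⟨c₁, c₂, c₃, x₁, x₂, x₃⟩ ⟨⟨⟨n₁, rfl⟩, ⟨n₂, rfl⟩, ⟨n₃, rfl⟩, hx₁, hx₂, hx₃⟩, hM⟩
  simp only [inR_iff_mem_coxOrder] at hx₁ hx₂ hx₃
  rw [pairI_self] at hM
  have two_mul_mem (n : ℤ) : 2 * (n : ℚ) ∈ (1 : Submodule ℤ ℚ) :=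
    mem_one_iff_exists_int.2 ⟨2 * n, by push_cast; rfl⟩
  have := sq_nonneg (n₁ : ℚ)
  have := sq_nonneg (n₂ : ℚ)
  have := sq_nonneg (n₃ : ℚ)
  have := onorm_nonneg x₁
  have := onorm_nonneg x₂
  have := onorm_nonneg x₃
  exact ⟨⟨two_mul_mem n₁, by linarith⟩, ⟨two_mul_mem n₂, by linarith⟩,
    ⟨two_mul_mem n₃, by linarith⟩, ⟨hx₁, by linarith⟩, ⟨hx₂, by linarith⟩, ⟨hx₃, by linarith⟩⟩

theorem wRankOne_and_fst_eq_one_iff {w : Wt} :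
    wRankOne w ∧ w.1 = 1 ↔ ∃ T : Jt, w = (1, T, sharpJ T, NJ T) := by
  constructor
  · obtain ⟨a, T, T', d⟩ := w
    rintro ⟨⟨-, hsharp, -, hpair⟩, rfl : a = 1⟩
    obtain rfl : sharpJ T = T' := by simpa using hsharp
    rw [pairI_sharpJ_self] at hpair
    obtain rfl : d = NJ T := by simp only at hpair; linarith
    exact ⟨T, rfl⟩
  · rintro ⟨T, rfl⟩
    exact ⟨⟨fun h => one_ne_zero (congrArg Prod.fst h), (one_smul ℚ _).symm, sharpJ_sharpJ T,
      by rw [pairI_sharpJ_self]; ring⟩, rfl⟩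

theorem inWZ_one_sharpJ {T : Jt} (hT : inJR T) {d : ℤ} (hd : NJ T = d) :
    inWZ (1, T, sharpJ T, NJ T) :=
  ⟨⟨1, Int.cast_one.symm⟩, hT, inJRdual_of_inJR (inJR_sharpJ hT), ⟨d, hd⟩⟩

/-- For a monic integral binary cubic `f(u,v) = u³ + bu²v + cuv² + dv³`, the set
`Ω_{f,I} = {w ∈ W_J(ℤ) : w rank one, pr_I(w) = f}` equals
`{(1,T,T^#,N_J(T)) : T ∈ J_R, (T,I^#) = b, (T^#,I) = c, N_J(T) = d}`, and this set is
finite. -/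
theorem Omega_fI_eq_and_finite (b c d : ℤ) :
    {w : Wt | inWZ w ∧ wRankOne w ∧ prI w = (1, (b : ℚ), (c : ℚ), (d : ℚ))} =
        {w : Wt | ∃ T : Jt, inJR T ∧ w = (1, T, sharpJ T, NJ T) ∧
          pairI T (sharpJ IJ) = (b : ℚ) ∧ pairI (sharpJ T) IJ = (c : ℚ) ∧
          NJ T = (d : ℚ)} ∧
      {w : Wt | inWZ w ∧ wRankOne w ∧ prI w = (1, (b : ℚ), (c : ℚ), (d : ℚ))}.Finite := by
  have hΩ : {w : Wt | inWZ w ∧ wRankOne w ∧ prI w = (1, (b : ℚ), (c : ℚ), (d : ℚ))} =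
      {w : Wt | ∃ T : Jt, inJR T ∧ w = (1, T, sharpJ T, NJ T) ∧
        pairI T (sharpJ IJ) = (b : ℚ) ∧ pairI (sharpJ T) IJ = (c : ℚ) ∧ NJ T = (d : ℚ)} := by
    ext w
    constructor
    · rintro ⟨⟨-, hT, -, -⟩, hw, hpr⟩
      simp only [prI, Prod.mk.injEq] at hpr
      obtain ⟨h1, hb, hc, hd⟩ := hpr
      obtain ⟨T, rfl⟩ := wRankOne_and_fst_eq_one_iff.1 ⟨hw, h1⟩
      exact ⟨T, hT, rfl, hb, hc, hd⟩
    · rintro ⟨T, hT, rfl, hb, hc, hd⟩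
      exact ⟨inWZ_one_sharpJ hT hd, (wRankOne_and_fst_eq_one_iff.2 ⟨T, rfl⟩).1,
        by simp only [prI, hb, hc, hd]⟩
  refine ⟨hΩ, hΩ ▸ ?_⟩
  refine ((finite_setOf_inJR_pairI_self_le ((b : ℚ) ^ 2 - 2 * c)).image
    fun T => ((1 : ℚ), T, sharpJ T, NJ T)).subset ?_
  rintro _ ⟨T, hT, rfl, hb, hc, -⟩
  exact ⟨T, ⟨hT, by rw [pairI_self_eq, hb, hc]⟩, rfl⟩
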